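/- Let P be the 3rd order, 3-dimensional stochastic tensor with frontal slices P(:,:,1) = [[1/2,1/3,1/2],[1/2,1/2,0],[0,1/3,1/2]], P(:,:,2) = [[1,0,1/2],[0,1,1/2],[0,0,0]], P(:,:,3) = [[0,0,1/2],[0,0,1/2],[1,1,0]]. Then: (a) states 1 and 3 communicate (1 ↔ 3); (b) f_{3 3 1} = f_{3 3 2} = f_{3 3 3} = 1, so state 3 is recurrent; and (c) f_{1 1 1} = 5/6 < 1 while f_{1 1 3} = 1, so state 1 is transient but not fully transient. Hence, for higher order Markov chains, recurrence and transience are not class properties of the communication relation. -/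

import Mathlib

/-! Removing the target state keeps the first-passage recursion linear in `F^{[k]}`. For target
state 1 one checks `F^{[5]} = ½ F^{[3]}`, so from the third step on the even and the odd terms
form two geometric series of ratio `½`, and `f_{11i₃}` has a closed form. For target state 3:
with previous state 3, states 1 and 2 move to 3 with certainty, so every walk returns within two
steps and `f_{33i₃} = p_{33i₃} + (1 - p_{33i₃}) = 1`. -/

open Finset

/-- A 3rd order, `n`-dimensional tensor: entry `p_{i₁ i₂ i₃}` is `P i₁ i₂ i₃`. -/
abbrev Tensor3 (n : ℕ) := Fin n → Fin n → Fin n → ℝ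

/-- The product `A ⊠ B`: `(A ⊠ B)_{i₁ i₂ i₃} = Σ_j a_{i₁ j i₂} b_{j i₂ i₃}`. -/
def tmul3 {n : ℕ} (A B : Tensor3 n) : Tensor3 n :=
  fun i₁ i₂ i₃ => ∑ j : Fin n, A i₁ j i₂ * B j i₂ i₃

/-- Tensor powers: `tpow3 P k` is `P^k`, with entries the `k`-step transition
probabilities `p^{(k)}_{i₁ i₂ i₃}`; `P^0` is the identity tensor. -/
def tpow3 {n : ℕ} (P : Tensor3 n) : ℕ → Tensor3 n
  | 0 => fun i₁ i₂ _ => if i₁ = i₂ then 1 else 0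
  | k + 1 => tmul3 (tpow3 P k) P

/-- `fpp3 P k` is the `(k+1)`-step first passage probability tensor `F^{[k+1]}`:
`f^{[1]} = p` and `f^{[k+1]}_{i₁ i₂ i₃} = Σ_{j ≠ i₁} f^{[k]}_{i₁ j i₂} p_{j i₂ i₃}`. -/
def fpp3 {n : ℕ} (P : Tensor3 n) : ℕ → Tensor3 n
  | 0 => P
  | k + 1 => fun i₁ i₂ i₃ =>
      ∑ j ∈ Finset.univ.filter (fun j => j ≠ i₁), fpp3 P k i₁ j i₂ * P j i₂ i₃

/-- The ever-reaching probability `f_{i₁ i₂ i₃} = Σ_{k=1}^∞ f^{[k]}_{i₁ i₂ i₃}`. -/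
noncomputable def everReach3 {n : ℕ} (P : Tensor3 n) : Tensor3 n :=
  fun i₁ i₂ i₃ => ∑' k : ℕ, fpp3 P k i₁ i₂ i₃

/-- State `j` is reachable from state `i` (`i → j`): for every `i₃` there is
`k ≥ 0` with `p^{(k)}_{j i i₃} > 0`. -/
def Reach3 {n : ℕ} (P : Tensor3 n) (i j : Fin n) : Prop :=
  ∀ i₃ : Fin n, ∃ k : ℕ, 0 < tpow3 P k j i i₃

/-- The chain is irreducible: for every nonempty proper `K ⊊ S` there are
`i₁ ∈ K` and `i₂, i₃ ∉ K` with `p_{i₁ i₂ i₃} > 0`. -/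
def Irreducible3 {n : ℕ} (P : Tensor3 n) : Prop :=
  ∀ K : Set (Fin n), K.Nonempty → K ≠ Set.univ →
    ∃ i₁ ∈ K, ∃ i₂, i₂ ∉ K ∧ ∃ i₃, i₃ ∉ K ∧ 0 < P i₁ i₂ i₃

/-- The chain is ergodic: for all `i₁ i₂ i₃` there is `k ≥ 1` with `p^{(k)}_{i₁ i₂ i₃} > 0`. -/
def Ergodic3 {n : ℕ} (P : Tensor3 n) : Prop :=
  ∀ i₁ i₂ i₃ : Fin n, ∃ k : ℕ, 1 ≤ k ∧ 0 < tpow3 P k i₁ i₂ i₃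

/-- The reduced transition matrix `Q` of a second order chain: rows and columns
are indexed by pairs, `Q (i₁,i₂) (j₁,j₂) = p_{i₁ i₂ j₂}` if `j₁ = i₂`, else `0`. -/
def reduced3 {n : ℕ} (P : Tensor3 n) : Matrix (Fin n × Fin n) (Fin n × Fin n) ℝ :=
  fun u v => if v.1 = u.2 then P u.1 u.2 v.2 else 0

/-- The transition tensor of Statement 15 (states `1,2,3` are `0,1,2 : Fin 3`). -/
noncomputable def P15 : Tensor3 3 := fun i₁ i₂ i₃ =>
  ![!![(1/2:ℝ), 1/3, 1/2; 1/2, 1/2, 0; 0, 1/3, 1/2],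
    !![1, 0, 1/2; 0, 1, 1/2; 0, 0, 0],
    !![0, 0, 1/2; 0, 0, 1/2; 1, 1, 0]] i₃ i₁ i₂

section FirstPassage

variable {n : ℕ} (P : Tensor3 n)

@[simp]
theorem fpp3_zero : fpp3 P 0 = P := rfl

theorem fpp3_succ_apply (k : ℕ) (i a b : Fin n) :
    fpp3 P (k + 1) i a b = ∑ j, fpp3 P k i j a * P j a b - fpp3 P k i i a * P i a b := by
  simp only [fpp3, filter_ne']
  exact sum_erase_eq_sub (mem_univ i)

theorem fpp3_succ_eq_smul {k l : ℕ} {i : Fin n} {c : ℝ} (h : fpp3 P k i = c • fpp3 P l i) :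
    fpp3 P (k + 1) i = c • fpp3 P (l + 1) i := by
  ext a b
  simp only [fpp3_succ_apply, h, Pi.smul_apply, smul_eq_mul, mul_sum, mul_sub, mul_assoc]

theorem fpp3_add_two_mul_eq_pow_smul {k : ℕ} {i : Fin n} {c : ℝ}
    (h : fpp3 P (k + 2) i = c • fpp3 P k i) (m j : ℕ) :
    fpp3 P (k + 2 * m + j) i = c ^ m • fpp3 P (k + j) i := by
  have shift : ∀ j, fpp3 P (k + j + 2) i = c • fpp3 P (k + j) i := by
    intro j
    induction j with
    | zero => exact h
    | succ j ih => exact fpp3_succ_eq_smul P ih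
  induction m with
  | zero => simp
  | succ m ih =>
    rw [show k + 2 * (m + 1) + j = k + (2 * m + j) + 2 by ring, shift, ← add_assoc, ih,
      smul_smul, pow_succ']

end FirstPassage

theorem hasSum_of_even_odd_geometric {f : ℕ → ℝ} {r a b : ℝ} (hr₀ : 0 ≤ r) (hr₁ : r < 1)
    (he : ∀ m, f (2 * m + 2) = r ^ m * a) (ho : ∀ m, f (2 * m + 3) = r ^ m * b) :
    HasSum f (f 0 + f 1 + (a + b) / (1 - r)) := by
  have hgeom := hasSum_geometric_of_lt_one hr₀ hr₁
  have heven : HasSum (fun m => f (2 * m + 2)) (a / (1 - r)) := by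
    rw [funext he, div_eq_inv_mul]
    exact hgeom.mul_right a
  have hodd : HasSum (fun m => f (2 * m + 1 + 2)) (b / (1 - r)) := by
    rw [show (fun m => f (2 * m + 1 + 2)) = fun m => r ^ m * b from funext ho, div_eq_inv_mul]
    exact hgeom.mul_right b
  refine (hasSum_nat_add_iff' 2).mp ?_
  simpa [sum_range_succ, add_div] using heven.even_add_odd (f := fun n => f (n + 2)) hodd

theorem fpp3_P15_four_zero : fpp3 P15 4 0 = (1 / 2 : ℝ) • fpp3 P15 2 0 := by
  ext a b
  fin_cases a <;> fin_cases b <;> simp [fpp3_succ_apply, Fin.sum_univ_three, P15] <;> norm_num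

theorem everReach3_P15_zero_zero (b : Fin 3) :
    everReach3 P15 0 0 b = fpp3 P15 0 0 0 b + fpp3 P15 1 0 0 b +
      (fpp3 P15 2 0 0 b + fpp3 P15 3 0 0 b) / (1 - 1 / 2) := by
  have decay := fpp3_add_two_mul_eq_pow_smul P15 fpp3_P15_four_zero
  refine (hasSum_of_even_odd_geometric (f := fun k => fpp3 P15 k 0 0 b) (by norm_num) (by norm_num)
    (fun m => ?_) (fun m => ?_)).tsum_eq
  · rw [show 2 * m + 2 = 2 + 2 * m + 0 by ring, decay]
    rfl
  · rw [show 2 * m + 3 = 2 + 2 * m + 1 by ring, decay]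
    rfl

theorem everReach3_P15_zero_zero_zero : everReach3 P15 0 0 0 = 5 / 6 := by
  rw [everReach3_P15_zero_zero]
  simp [fpp3_succ_apply, Fin.sum_univ_three, P15]
  norm_num

theorem everReach3_P15_zero_zero_two : everReach3 P15 0 0 2 = 1 := by
  rw [everReach3_P15_zero_zero]
  simp [fpp3_succ_apply, Fin.sum_univ_three, P15]
  norm_num

theorem fpp3_P15_two_two_eq_zero (k : ℕ) (i₃ : Fin 3) : fpp3 P15 (k + 2) 2 2 i₃ = 0 := by
  have hleave : ∀ a : Fin 3, a ≠ 2 → fpp3 P15 (k + 1) 2 a 2 = 0 := by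
    intro a ha
    fin_cases a <;> simp_all [fpp3_succ_apply, Fin.sum_univ_three, P15]
  rw [fpp3_succ_apply]
  simp [Fin.sum_univ_three, hleave]

theorem everReach3_P15_two_two (i₃ : Fin 3) : everReach3 P15 2 2 i₃ = 1 := by
  have hsum : HasSum (fun k => fpp3 P15 k 2 2 i₃) (∑ k ∈ range 2, fpp3 P15 k 2 2 i₃) := by
    refine hasSum_sum_of_ne_finset_zero fun k hk => ?_
    obtain ⟨k, rfl⟩ : ∃ l, k = l + 2 := ⟨k - 2, by simp at hk; omega⟩
    exact fpp3_P15_two_two_eq_zero k i₃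
  rw [everReach3, hsum.tsum_eq]
  fin_cases i₃ <;> simp [sum_range_succ, fpp3_succ_apply, Fin.sum_univ_three, P15] <;> norm_num

theorem reach3_P15_zero_two : Reach3 P15 0 2 := fun i₃ =>
  ⟨3, by fin_cases i₃ <;> simp [tpow3, tmul3, Fin.sum_univ_three, P15]⟩

theorem reach3_P15_two_zero : Reach3 P15 2 0 := fun i₃ =>
  ⟨1, by fin_cases i₃ <;> simp [tpow3, tmul3, P15]⟩

/-- (a) states `1` and `3` communicate; (b) `f_{3 3 i₃} = 1` for
all `i₃`, so state `3` is recurrent; (c) `f_{111} = 5/6 < 1` while `f_{113} = 1`,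
so state `1` is transient but not fully transient. -/
theorem recurrence_not_class_property :
    (Reach3 P15 0 2 ∧ Reach3 P15 2 0) ∧
    (∀ i₃ : Fin 3, everReach3 P15 2 2 i₃ = 1) ∧
    everReach3 P15 0 0 0 = 5 / 6 ∧
    everReach3 P15 0 0 0 < 1 ∧
    everReach3 P15 0 0 2 = 1 :=
  ⟨⟨reach3_P15_zero_two, reach3_P15_two_zero⟩, everReach3_P15_two_two,
    everReach3_P15_zero_zero_zero, by rw [everReach3_P15_zero_zero_zero]; norm_num,
    everReach3_P15_zero_zero_two⟩
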